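/- arXiv:1010.3889 — 2 statements merged into one kernel-verified Lean document; each statement's English description precedes it below -/
import Mathlib

section
/- (Proposition 3, equations (13)–(14)) For every integer n ≥ 0 and every integer x, the fermionic p-adic (1/q)-integral of x₁ ↦ [1−x+x₁]_{1/q}^n exists and ∫_{ℤ_p} [1−x+x₁]_{1/q}^n dμ_{−1/q}(x₁) = (−1)^n·q^n·ξ_{n,q}(x) = (−1)^n·q^n·((1+q)/(1−q)^n)·Σ_{l=0}^{n} C(n,l)·(−1)^l·q^{l·x}/(1+q^{l+1}); in particular it equals (−1)^n·q^n·∫_{ℤ_p} [x+x₁]_q^n dμ_{−q}(x₁). -/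
open Finset Filter

/-- `[a]_q = (1 - q^a)/(1 - q)` for `a : ℤ`. -/
noncomputable def qnum {p : ℕ} [Fact p.Prime] (q : ℚ_[p]) (a : ℤ) : ℚ_[p] :=
  (1 - q ^ a) / (1 - q)

/-- Kim's q-Euler polynomial `ξ_{n,q}(x)` (closed form). -/
noncomputable def xi {p : ℕ} [Fact p.Prime] (q : ℚ_[p]) (n : ℕ) (x : ℤ) : ℚ_[p] :=
  ((1 + q) / (1 - q) ^ n) *
    ∑ l ∈ Finset.range (n + 1),
      (n.choose l : ℚ_[p]) * (-1) ^ l * q ^ ((l : ℤ) * x) / (1 + q ^ (l + 1))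

/-- The fermionic p-adic `r`-integral statement:
`∫_{ℤ_p} g dμ_{-r} = L` means the Riemann-type sums
`(1/[p^N]_{-r}) · Σ_{x=0}^{p^N-1} g(x) (-r)^x` converge to `L`. -/
def fermionicIntegral (p : ℕ) [Fact p.Prime] (r : ℚ_[p]) (g : ℕ → ℚ_[p]) (L : ℚ_[p]) : Prop :=
  Filter.Tendsto
    (fun N : ℕ => ((1 + r) / (1 - (-r) ^ (p ^ N))) * ∑ x ∈ Finset.range (p ^ N), g x * (-r) ^ x)
    Filter.atTop (nhds L)

/-- The q-Bernstein polynomial `B_{k,n}(x,q) = C(n,k) [x]_q^k [1-x]_{1/q}^{n-k}`. -/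
noncomputable def bern {p : ℕ} [Fact p.Prime] (q : ℚ_[p]) (k n : ℕ) (x : ℤ) : ℚ_[p] :=
  (n.choose k : ℚ_[p]) * (qnum q x) ^ k * (qnum q⁻¹ (1 - x)) ^ (n - k)

/-!
Expanding `[a + y]_q ^ n = (1 - q ^ a q ^ y) ^ n / (1 - q) ^ n` binomially reduces everything, by
linearity, to the integrals of `y ↦ r ^ y` with `r = q ^ l`. Because `p ^ N` is odd, their
Riemann sums are geometric sums equal to
`(1 + q) / (1 + q ^ p ^ N) · (1 + (q r) ^ p ^ N) / (1 + q r)`, and for a `1`-unit `u` one has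
`u ^ p ^ N → 1` p-adically, so the integral is `(1 + q) / (1 + q r)`; summing over `l` gives
`ξ_{n,q}(a)`. The `1/q`-integral then follows from the symmetry
`ξ_{n,1/q}(1 - x) = (-1) ^ n q ^ n ξ_{n,q}(x)`. Since `p` is odd, `‖2‖ = 1`, which keeps every
`1 + q r` away from `0`.
-/

open Topology

lemma one_add_ne_zero_of_norm_one_sub_lt {K : Type*} [NormedRing K] {u : K}
    (hu : ‖1 - u‖ < ‖(2 : K)‖) : 1 + u ≠ 0 := by
  intro h
  rw [show 1 - u = 2 - (1 + u) by rw [← one_add_one_eq_two]; abel, h, sub_zero] at hu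
  exact hu.false

section Ultrametric

variable {K : Type*} [NormedField K] [IsUltrametricDist K]

lemma norm_eq_one_of_norm_one_sub_lt_one {u : K} (hu : ‖1 - u‖ < 1) : ‖u‖ = 1 := by
  have h := IsUltrametricDist.norm_add_eq_max_of_norm_ne_norm (x := (1 : K)) (y := -(1 - u))
    (by rw [norm_neg, norm_one]; exact hu.ne')
  rwa [show (1 : K) + -(1 - u) = u by ring, norm_one, norm_neg, max_eq_left hu.le] at h

lemma norm_one_sub_pow_le {u : K} (hu : ‖u‖ ≤ 1) (k : ℕ) : ‖1 - u ^ k‖ ≤ ‖1 - u‖ := by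
  induction k with
  | zero => simp
  | succ k ih =>
    rw [show 1 - u ^ (k + 1) = (1 - u ^ k) + u ^ k * (1 - u) by ring]
    refine (IsUltrametricDist.norm_add_le_max _ _).trans (max_le ih ?_)
    rw [norm_mul, norm_pow]
    exact mul_le_of_le_one_left (norm_nonneg _) (pow_le_one₀ (norm_nonneg _) hu)

lemma norm_one_sub_pow_le_mul_max {u : K} (hu : ‖u‖ ≤ 1) (m : ℕ) :
    ‖1 - u ^ m‖ ≤ ‖1 - u‖ * max ‖1 - u‖ ‖(m : K)‖ := by
  have hgeom : 1 - u ^ m = (1 - u) * ((∑ j ∈ range m, (u ^ j - 1)) + m) := by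
    rw [sum_sub_distrib, sum_const, card_range, nsmul_one, sub_add_cancel]
    linear_combination geom_sum_mul u m
  rw [hgeom, norm_mul]
  refine mul_le_mul_of_nonneg_left ((IsUltrametricDist.norm_add_le_max _ _).trans
    (max_le_max_right _ ?_)) (norm_nonneg _)
  refine IsUltrametricDist.norm_sum_le_of_forall_le_of_nonneg (norm_nonneg _) fun j _ => ?_
  rw [norm_sub_rev]
  exact norm_one_sub_pow_le hu j

lemma tendsto_pow_pow_nhds_one {m : ℕ} (hm : ‖(m : K)‖ < 1) {u : K} (hu : ‖1 - u‖ < 1) :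
    Tendsto (fun N : ℕ => u ^ m ^ N) atTop (𝓝 1) := by
  -- iterating `norm_one_sub_pow_le_mul_max`, the distance to `1` shrinks by a factor `c < 1`
  set c := max ‖1 - u‖ ‖(m : K)‖
  have hc0 : 0 ≤ c := (norm_nonneg _).trans (le_max_left _ _)
  have hc1 : c < 1 := max_lt hu hm
  have hbound : ∀ N : ℕ, ‖1 - u ^ m ^ N‖ ≤ c ^ (N + 1) := by
    intro N
    induction N with
    | zero => simpa only [pow_zero, pow_one, zero_add] using le_max_left _ _
    | succ N ih =>
      have hN : ‖u ^ m ^ N‖ ≤ 1 := by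
        rw [norm_pow, norm_eq_one_of_norm_one_sub_lt_one hu, one_pow]
      have hdc : ‖1 - u ^ m ^ N‖ ≤ c := ih.trans (pow_le_of_le_one hc0 hc1.le N.succ_ne_zero)
      calc ‖1 - u ^ m ^ (N + 1)‖ = ‖1 - (u ^ m ^ N) ^ m‖ := by rw [← pow_mul, pow_succ]
        _ ≤ ‖1 - u ^ m ^ N‖ * max ‖1 - u ^ m ^ N‖ ‖(m : K)‖ :=
          norm_one_sub_pow_le_mul_max hN m
        _ ≤ c ^ (N + 1) * c :=
          mul_le_mul ih (max_le hdc (le_max_right _ _)) (by positivity) (by positivity)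
        _ = c ^ (N + 1 + 1) := (pow_succ _ _).symm
  rw [tendsto_iff_norm_sub_tendsto_zero]
  refine squeeze_zero (fun _ => norm_nonneg _) (fun N => (norm_sub_rev _ _).trans_le (hbound N)) ?_
  exact (tendsto_pow_atTop_nhds_zero_of_lt_one hc0 hc1).comp (tendsto_add_atTop_nat 1)

lemma norm_one_sub_mul_lt_one {a b : K} (ha : ‖1 - a‖ < 1) (hb : ‖1 - b‖ < 1) :
    ‖1 - a * b‖ < 1 := by
  rw [show 1 - a * b = (1 - a) + a * (1 - b) by ring]
  refine (IsUltrametricDist.norm_add_le_max _ _).trans_lt (max_lt ha ?_)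
  rwa [norm_mul, norm_eq_one_of_norm_one_sub_lt_one ha, one_mul]

lemma ne_zero_of_norm_one_sub_lt_one {u : K} (hu : ‖1 - u‖ < 1) : u ≠ 0 :=
  norm_ne_zero_iff.mp ((norm_eq_one_of_norm_one_sub_lt_one hu).trans_ne one_ne_zero)

lemma norm_one_sub_inv {u : K} (hu : ‖1 - u‖ < 1) : ‖1 - u⁻¹‖ = ‖1 - u‖ := by
  have hu0 := ne_zero_of_norm_one_sub_lt_one hu
  rw [show 1 - u⁻¹ = -u⁻¹ * (1 - u) by field_simp; ring, norm_mul, norm_neg, norm_inv,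
    norm_eq_one_of_norm_one_sub_lt_one hu, inv_one, one_mul]

end Ultrametric

lemma Padic.norm_two_of_odd {p : ℕ} [Fact p.Prime] (hp : Odd p) : ‖(2 : ℚ_[p])‖ = 1 := by
  exact_mod_cast Padic.norm_natCast_eq_one_iff.mpr (Nat.coprime_two_right.mpr hp)

lemma sum_range_mul_neg_pow_of_odd {F : Type*} [Field F] {M : ℕ} (hM : Odd M) {q r : F}
    (hqr : 1 + q * r ≠ 0) :
    (1 + q) / (1 - (-q) ^ M) * ∑ y ∈ range M, r ^ y * (-q) ^ y
      = (1 + q) / (1 + q ^ M) * ((1 + (q * r) ^ M) / (1 + q * r)) := by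
  have hne : -(q * r) ≠ 1 := fun h => hqr (by linear_combination -h)
  simp_rw [← mul_pow]
  rw [show r * -q = -(q * r) by ring, geom_sum_eq hne,
    hM.neg_pow, hM.neg_pow, sub_neg_eq_add, show -(q * r) ^ M - 1 = -(1 + (q * r) ^ M) by ring,
    show -(q * r) - 1 = -(1 + q * r) by ring, neg_div_neg_eq]

section Fermionic

variable {p : ℕ} [Fact p.Prime] {r : ℚ_[p]}

lemma fermionicIntegral.const_mul {g : ℕ → ℚ_[p]} {L : ℚ_[p]} (h : fermionicIntegral p r g L)
    (c : ℚ_[p]) : fermionicIntegral p r (fun y => c * g y) (c * L) := by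
  refine (Tendsto.const_mul c h).congr fun N => ?_
  simp only [mul_sum]
  exact sum_congr rfl fun y _ => by ring

lemma fermionicIntegral.sum {ι : Type*} (s : Finset ι) {g : ι → ℕ → ℚ_[p]} {L : ι → ℚ_[p]}
    (h : ∀ i ∈ s, fermionicIntegral p r (g i) (L i)) :
    fermionicIntegral p r (fun y => ∑ i ∈ s, g i y) (∑ i ∈ s, L i) := by
  refine (tendsto_finsetSum s h).congr fun N => ?_
  simp only [sum_mul, mul_sum]
  exact sum_comm

theorem fermionicIntegral_pow (hp : Odd p) {q r : ℚ_[p]} (hq : ‖1 - q‖ < 1) (hr : ‖1 - r‖ < 1) :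
    fermionicIntegral p q (fun y => r ^ y) ((1 + q) / (1 + q * r)) := by
  have hqr := norm_one_sub_mul_lt_one hq hr
  have hne : 1 + q * r ≠ 0 :=
    one_add_ne_zero_of_norm_one_sub_lt (hqr.trans_eq (Padic.norm_two_of_odd hp).symm)
  have hlim : ∀ u : ℚ_[p], ‖1 - u‖ < 1 → Tendsto (fun N => 1 + u ^ p ^ N) atTop (𝓝 2) :=
    fun u hu => by
      simpa only [one_add_one_eq_two] using
        (tendsto_pow_pow_nhds_one Padic.norm_p_lt_one hu).const_add 1
  have hT := ((tendsto_const_nhds (x := 1 + q)).div (hlim q hq) two_ne_zero).mul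
    ((hlim _ hqr).div_const (1 + q * r))
  rw [fermionicIntegral]
  convert hT.congr fun N => (sum_range_mul_neg_pow_of_odd hp.pow hne).symm using 2
  field_simp

end Fermionic

section QEuler

variable {p : ℕ} [Fact p.Prime]

lemma qnum_add_pow {q : ℚ_[p]} (hq0 : q ≠ 0) (n : ℕ) (a : ℤ) (y : ℕ) :
    qnum q (a + y) ^ n = ∑ l ∈ range (n + 1),
      ((1 - q) ^ n)⁻¹ * ((n.choose l : ℚ_[p]) * (-1) ^ l * q ^ ((l : ℤ) * a)) * (q ^ l) ^ y := by
  rw [qnum, zpow_add₀ hq0, zpow_natCast, div_pow, div_eq_inv_mul,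
    ← neg_add_eq_sub (q ^ a * q ^ y), add_pow, mul_sum]
  refine sum_congr rfl fun l _ => ?_
  rw [one_pow, mul_one, neg_pow, mul_pow, mul_comm (l : ℤ), zpow_mul, zpow_natCast, ← pow_mul,
    ← pow_mul, mul_comm y l]
  ring

theorem fermionicIntegral_qnum_add_pow (hp : Odd p) {q : ℚ_[p]} (hq : ‖1 - q‖ < 1) (n : ℕ)
    (a : ℤ) :
    fermionicIntegral p q (fun y => qnum q (a + y) ^ n) (xi q n a) := by
  have hpow : ∀ l : ℕ, ‖1 - q ^ l‖ < 1 := fun l =>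
    (norm_one_sub_pow_le (norm_eq_one_of_norm_one_sub_lt_one hq).le l).trans_lt hq
  have h := fermionicIntegral.sum (range (n + 1)) fun l _ =>
    (fermionicIntegral_pow hp hq (hpow l)).const_mul
      (((1 - q) ^ n)⁻¹ * ((n.choose l : ℚ_[p]) * (-1) ^ l * q ^ ((l : ℤ) * a)))
  convert h using 1
  · exact funext (qnum_add_pow (ne_zero_of_norm_one_sub_lt_one hq) n a)
  · rw [xi, mul_sum]
    exact sum_congr rfl fun l _ => by ring

lemma xi_inv_one_sub {q : ℚ_[p]} (hq0 : q ≠ 0) (n : ℕ) (x : ℤ) :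
    xi q⁻¹ n (1 - x) = (-1) ^ n * q ^ n * xi q n x := by
  have hterm : ∀ l ∈ range (n + 1),
      (n.choose l : ℚ_[p]) * (-1) ^ l * q⁻¹ ^ ((l : ℤ) * (1 - x)) / (1 + q⁻¹ ^ (l + 1))
        = q * ((n.choose l : ℚ_[p]) * (-1) ^ l * q ^ ((l : ℤ) * x) / (1 + q ^ (l + 1))) := by
    intro l _
    rw [inv_zpow', show -((l : ℤ) * (1 - x)) = l * x - l by ring, zpow_sub₀ hq0, zpow_natCast,
      inv_pow, show 1 + (q ^ (l + 1))⁻¹ = (1 + q ^ (l + 1)) * (q ^ (l + 1))⁻¹ by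
        rw [add_mul, mul_inv_cancel₀ (pow_ne_zero _ hq0)]; ring]
    simp only [div_eq_mul_inv, mul_inv, inv_inv, pow_succ]
    linear_combination
      ((n.choose l : ℚ_[p]) * (-1) ^ l * q ^ ((l : ℤ) * x) * (1 + q ^ l * q)⁻¹ * q) *
        inv_mul_cancel₀ (pow_ne_zero l hq0)
  have hprefactor :
      (1 + q⁻¹) / (1 - q⁻¹) ^ n * q = (-1) ^ n * q ^ n * ((1 + q) / (1 - q) ^ n) := by
    rw [show 1 - q⁻¹ = -(1 - q) * q⁻¹ by rw [neg_sub, sub_mul, mul_inv_cancel₀ hq0, one_mul],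
      mul_pow, neg_pow, inv_pow]
    simp only [div_eq_mul_inv, mul_inv, inv_inv, ← inv_pow, inv_neg, inv_one]
    linear_combination ((-1) ^ n * ((1 - q) ^ n)⁻¹ * q ^ n) * mul_inv_cancel₀ hq0
  rw [xi, xi, sum_congr rfl hterm, ← mul_sum, ← mul_assoc, hprefactor, mul_assoc]

end QEuler

theorem stmt4_general (p : ℕ) [Fact p.Prime] (hp : Odd p) (q : ℚ_[p]) (hq : ‖1 - q‖ < 1) (n : ℕ) (x : ℤ) :
    fermionicIntegral p q⁻¹ (fun x₁ => (qnum q⁻¹ (1 - x + x₁)) ^ n) ((-1) ^ n * q ^ n * xi q n x) ∧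
      (-1) ^ n * q ^ n * xi q n x
        = (-1) ^ n * q ^ n * ((1 + q) / (1 - q) ^ n) *
            ∑ l ∈ Finset.range (n + 1),
              (n.choose l : ℚ_[p]) * (-1) ^ l * q ^ ((l : ℤ) * x) / (1 + q ^ (l + 1)) ∧
      fermionicIntegral p q (fun x₁ => (qnum q (x + x₁)) ^ n) (xi q n x) := by
  refine ⟨?_, by rw [xi]; ring, fermionicIntegral_qnum_add_pow hp hq n x⟩
  rw [← xi_inv_one_sub (ne_zero_of_norm_one_sub_lt_one hq)]
  exact fermionicIntegral_qnum_add_pow hp ((norm_one_sub_inv hq).trans_lt hq) n (1 - x)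

theorem stmt4 (p : ℕ) [Fact p.Prime] (hp : Odd p) (q : ℚ_[p]) (hq : ‖1 - q‖ < 1) (hq1 : q ≠ 1) (n : ℕ) (x : ℤ) :
    fermionicIntegral p q⁻¹ (fun x₁ => (qnum q⁻¹ (1 - x + x₁)) ^ n) ((-1) ^ n * q ^ n * xi q n x) ∧
      (-1) ^ n * q ^ n * xi q n x
        = (-1) ^ n * q ^ n * ((1 + q) / (1 - q) ^ n) *
            ∑ l ∈ Finset.range (n + 1),
              (n.choose l : ℚ_[p]) * (-1) ^ l * q ^ ((l : ℤ) * x) / (1 + q ^ (l + 1)) ∧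
      fermionicIntegral p q (fun x₁ => (qnum q (x + x₁)) ^ n) (xi q n x) :=
  stmt4_general p hp q hq n x
end

section
/- (Theorem 9, first part) Let s ≥ 1 and let n₁, …, n_s, k ∈ ℕ with k ≥ 1 and N := n₁ + ⋯ + n_s > s·k. Then Σ_{l=0}^{N−sk} C(N−sk,l)·(−1)^l·ξ_{l+sk,q} = q²·Σ_{l=0}^{sk} C(sk,l)·(−1)^{sk−l}·ξ_{N−l,1/q}, where ξ_{j,1/q} denotes the q-Euler number with parameter 1/q in place of q. -/
open Finset Filter

/-!
Write `ξ_{n,q} = I_q(Z^n)` for the linear functional `I_q(X^j) = [2]_q / (1 + q^(j+1))` on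
polynomials and `Z = (1 - X)/(1 - q)`. With `m = s k` and `N = Σ nᵢ`, the binomial theorem turns
the left side into `I_q(P)` with `P = Z^m (1 - Z)^(N-m)`, and the right side into
`I_{1/q}(Z'^(N-m) (1 - Z')^m)`, where `Z'` is the analogue of `Z` for `1/q`. Since
`I_{1/q}(f) = I_q(f(qX))` and `Z(qX) = 1 - Z'`, the right side is `I_q(P(q^2 X))`. The fermionic
translation identity `q I_q(f(qX)) + I_q(f) = [2]_q f(1)`, applied to `P` and to `P(qX)`, both of
which vanish at `1` because `Z(1) = 0 = (1 - Z)(q)`, gives `I_q(P) = q^2 I_q(P(q^2 X))`.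
-/

open Polynomial

section Binomial

variable {R A : Type*} [CommRing R] [CommRing A] [Algebra R A]

lemma sum_choose_mul_neg_one_pow_mul_map_pow_add (φ : A →ₗ[R] R) (Z : A) (a b : ℕ) :
    ∑ l ∈ range (b + 1), (b.choose l : R) * (-1) ^ l * φ (Z ^ (l + a))
      = φ (Z ^ a * (1 - Z) ^ b) := by
  rw [sub_eq_neg_add, add_pow, mul_sum, map_sum]
  refine sum_congr rfl fun l _ => ?_
  rw [← smul_eq_mul, ← map_smul]
  congr 1
  rw [Algebra.smul_def]
  simp only [map_mul, map_pow, map_neg, map_one, map_natCast]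
  ring

lemma sum_choose_mul_neg_one_pow_sub_mul_map_pow_sub (φ : A →ₗ[R] R) (Z : A) {b N : ℕ}
    (hb : b ≤ N) :
    ∑ l ∈ range (b + 1), (b.choose l : R) * (-1) ^ (b - l) * φ (Z ^ (N - l))
      = φ (Z ^ (N - b) * (1 - Z) ^ b) := by
  rw [sub_eq_add_neg, add_pow, mul_sum, map_sum]
  refine sum_congr rfl fun l hl => ?_
  have hN : N - l = N - b + (b - l) := by have := mem_range.mp hl; omega
  rw [← smul_eq_mul, ← map_smul, hN]
  congr 1
  rw [Algebra.smul_def]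
  simp only [map_mul, map_pow, map_neg, map_one, map_natCast]
  ring

end Binomial

section QEulerFunctional

variable {K : Type*} [Field K]

/-- `qEulerFunctional q f` models the fermionic integral `∫_{ℤ_p} f(q^x) dμ_{-q}(x)`. -/
noncomputable def qEulerFunctional (q : K) : K[X] →ₗ[K] K :=
  lsum fun j => ((1 + q) / (1 + q ^ (j + 1))) • LinearMap.id

lemma qEulerFunctional_monomial (q : K) (j : ℕ) (c : K) :
    qEulerFunctional q (monomial j c) = c * ((1 + q) / (1 + q ^ (j + 1))) := by
  simp [qEulerFunctional, mul_comm]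

lemma monomial_comp_C_mul_X (j : ℕ) (c a : K) :
    (monomial j c).comp (C a * X) = monomial j (c * a ^ j) := by
  rw [monomial_comp, mul_pow, ← mul_assoc, ← C_pow, ← C_mul, C_mul_X_pow_eq_monomial]

lemma qEulerFunctional_inv {q : K} (hq : q ≠ 0) (f : K[X]) :
    qEulerFunctional q⁻¹ f = qEulerFunctional q (f.comp (C q * X)) := by
  induction f using Polynomial.induction_on' with
  | add f g hf hg => simp only [add_comp, map_add, hf, hg]
  | monomial j c =>
    rw [monomial_comp_C_mul_X, qEulerFunctional_monomial, qEulerFunctional_monomial]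
    have h1 : 1 + q⁻¹ = (1 + q) * q⁻¹ := by
      rw [add_mul, one_mul, mul_inv_cancel₀ hq, add_comm]
    have h2 : 1 + q⁻¹ ^ (j + 1) = (1 + q ^ (j + 1)) * q⁻¹ ^ (j + 1) := by
      rw [add_mul, one_mul, ← mul_pow, mul_inv_cancel₀ hq, one_pow, add_comm]
    have h3 : q⁻¹ / q⁻¹ ^ (j + 1) = q ^ j := by
      rw [pow_succ, div_mul_cancel_right₀ (inv_ne_zero hq), inv_pow, inv_inv]
    rw [h1, h2, mul_div_mul_comm, h3]
    ring

/-- The fermionic translation identity `q ∫ f(x+1) dμ_{-q} + ∫ f(x) dμ_{-q} = [2]_q f(0)`. -/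
lemma qEulerFunctional_shift {q : K} (hq : ∀ j : ℕ, 1 + q ^ (j + 1) ≠ 0) (f : K[X]) :
    q * qEulerFunctional q (f.comp (C q * X)) + qEulerFunctional q f = (1 + q) * f.eval 1 := by
  induction f using Polynomial.induction_on' with
  | add f g hf hg => simp only [add_comp, map_add, eval_add]; linear_combination hf + hg
  | monomial j c =>
    rw [monomial_comp_C_mul_X, qEulerFunctional_monomial, qEulerFunctional_monomial, eval_monomial,
      one_pow, mul_one]
    have hj := hq j
    field_simp
    ring

lemma qEulerFunctional_eq_sq_mul_comp_comp {q : K} (hq : ∀ j : ℕ, 1 + q ^ (j + 1) ≠ 0)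
    {f : K[X]} (hf1 : f.eval 1 = 0) (hfq : f.eval q = 0) :
    qEulerFunctional q f = q ^ 2 * qEulerFunctional q ((f.comp (C q * X)).comp (C q * X)) := by
  have hshift := qEulerFunctional_shift hq f
  have hshift' := qEulerFunctional_shift hq (f.comp (C q * X))
  rw [hf1, mul_zero] at hshift
  rw [eval_comp, eval_mul, eval_C, eval_X, mul_one, hfq, mul_zero] at hshift'
  linear_combination hshift - q * hshift'

/-- `[x]_q = (qIntPoly q).eval (q ^ x)`, so `qEulerNumber q n` is `∫ [x]_q^n dμ_{-q}(x) = ξ_{n,q}`.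
-/
noncomputable def qIntPoly (q : K) : K[X] := C (1 - q)⁻¹ * (1 - X)

noncomputable def qEulerNumber (q : K) (n : ℕ) : K := qEulerFunctional q (qIntPoly q ^ n)

lemma eval_one_qIntPoly (q : K) : (qIntPoly q).eval 1 = 0 := by simp [qIntPoly]

lemma eval_self_qIntPoly {q : K} (hq1 : q ≠ 1) : (qIntPoly q).eval q = 1 := by
  simp [qIntPoly, inv_mul_cancel₀ (sub_ne_zero.mpr hq1.symm)]

lemma qIntPoly_comp_C_mul_X_add_qIntPoly_inv {q : K} (hq0 : q ≠ 0) (hq1 : q ≠ 1) :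
    (qIntPoly q).comp (C q * X) + qIntPoly q⁻¹ = 1 := by
  have h1q : 1 - q ≠ 0 := sub_ne_zero.mpr hq1.symm
  have hinv : (1 - q⁻¹)⁻¹ = -q * (1 - q)⁻¹ := by field_simp; ring
  simp only [qIntPoly, mul_comp, C_comp, sub_comp, one_comp, X_comp, hinv]
  calc C (1 - q)⁻¹ * (1 - C q * X) + C (-q * (1 - q)⁻¹) * (1 - X)
      = C ((1 - q)⁻¹ * (1 - q)) := by simp only [map_mul, map_neg, map_sub, map_one]; ring
    _ = 1 := by rw [inv_mul_cancel₀ h1q, map_one]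

theorem sum_choose_mul_qEulerNumber_eq_sq_mul_sum_inv {q : K} (hq0 : q ≠ 0) (hq1 : q ≠ 1)
    (hq : ∀ j : ℕ, 1 + q ^ (j + 1) ≠ 0) {m N : ℕ} (hm : 1 ≤ m) (hmN : m < N) :
    ∑ l ∈ range (N - m + 1), ((N - m).choose l : K) * (-1) ^ l * qEulerNumber q (l + m)
      = q ^ 2 * ∑ l ∈ range (m + 1),
          (m.choose l : K) * (-1) ^ (m - l) * qEulerNumber q⁻¹ (N - l) := by
  have hcomp : (qIntPoly q).comp (C q * X) = 1 - qIntPoly q⁻¹ :=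
    eq_sub_of_add_eq (qIntPoly_comp_C_mul_X_add_qIntPoly_inv hq0 hq1)
  simp only [qEulerNumber]
  rw [sum_choose_mul_neg_one_pow_mul_map_pow_add,
    sum_choose_mul_neg_one_pow_sub_mul_map_pow_sub _ _ hmN.le, qEulerFunctional_inv hq0,
    qEulerFunctional_eq_sq_mul_comp_comp hq]
  · simp only [mul_comp, pow_comp, sub_comp, one_comp, hcomp, sub_sub_cancel]
    rw [mul_comm ((1 - _) ^ m)]
  · simp [eval_one_qIntPoly, zero_pow (by omega : m ≠ 0)]
  · simp [eval_self_qIntPoly hq1, zero_pow (by omega : N - m ≠ 0)]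

end QEulerFunctional

lemma xi_zero_eq_qEulerNumber {p : ℕ} [Fact p.Prime] (q : ℚ_[p]) (n : ℕ) :
    xi q n 0 = qEulerNumber q n := by
  rw [qEulerNumber, qIntPoly, mul_pow, ← C_pow, ← smul_eq_C_mul, map_smul,
    sub_eq_neg_add (1 : ℚ_[p][X]), add_pow, map_sum, xi, smul_eq_mul, mul_sum, mul_sum]
  refine sum_congr rfl fun l _ => ?_
  have hterm : (-X) ^ l * 1 ^ (n - l) * (n.choose l : ℚ_[p][X])
      = monomial l ((-1) ^ l * (n.choose l : ℚ_[p])) := by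
    rw [← C_mul_X_pow_eq_monomial, ← C_eq_natCast, map_mul, map_pow, map_neg, map_one, neg_pow]
    ring
  rw [hterm, qEulerFunctional_monomial, mul_zero, zpow_zero, mul_one]
  ring

section Ultrametric

variable {R : Type*} [NormedRing R] [NormOneClass R] [IsUltrametricDist R]

lemma norm_eq_one_of_norm_one_sub_lt_one_s18 {q : R} (hq : ‖1 - q‖ < 1) : ‖q‖ = 1 := by
  have h : ‖(1 : R)‖ ≠ ‖-(1 - q)‖ := by rw [norm_neg, norm_one]; exact hq.ne'
  have := IsUltrametricDist.norm_add_eq_max_of_norm_ne_norm h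
  rwa [show (1 : R) + -(1 - q) = q by abel, norm_one, norm_neg, max_eq_left hq.le] at this

lemma norm_one_sub_pow_lt_one {q : R} (hq : ‖1 - q‖ < 1) (n : ℕ) : ‖1 - q ^ n‖ < 1 := by
  induction n with
  | zero => simp
  | succ n ih =>
    have h : 1 - q ^ (n + 1) = (1 - q ^ n) + q ^ n * (1 - q) := by rw [pow_succ]; noncomm_ring
    rw [h]
    refine (IsUltrametricDist.norm_add_le_max _ _).trans_lt (max_lt ih ?_)
    calc ‖q ^ n * (1 - q)‖ ≤ ‖q ^ n‖ * ‖1 - q‖ := norm_mul_le _ _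
      _ ≤ 1 * ‖1 - q‖ := by
          gcongr
          exact (norm_pow_le q n).trans (by rw [norm_eq_one_of_norm_one_sub_lt_one_s18 hq, one_pow])
      _ < 1 := by rwa [one_mul]

end Ultrametric

lemma Padic.one_add_pow_ne_zero {p : ℕ} [Fact p.Prime] (hp : Odd p) {q : ℚ_[p]}
    (hq : ‖1 - q‖ < 1) (n : ℕ) : 1 + q ^ n ≠ 0 := by
  intro h
  have h2 : 1 - q ^ n = ((2 : ℕ) : ℚ_[p]) := by linear_combination -h
  have := norm_one_sub_pow_lt_one hq n
  rw [h2, Padic.norm_natCast_eq_one_iff.mpr hp.coprime_two_right] at this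
  exact this.false

theorem stmt18 (p : ℕ) [Fact p.Prime] (hp : Odd p) (q : ℚ_[p]) (hq : ‖1 - q‖ < 1) (hq1 : q ≠ 1) (s : ℕ) (hs : 1 ≤ s) (n : Fin s → ℕ) (k : ℕ) (hk : 1 ≤ k)
    (hN : s * k < ∑ i, n i) :
    ∑ l ∈ Finset.range ((∑ i, n i) - s * k + 1),
        (((∑ i, n i) - s * k).choose l : ℚ_[p]) * (-1) ^ l * xi q (l + s * k) 0
      = q ^ 2 * ∑ l ∈ Finset.range (s * k + 1),
          ((s * k).choose l : ℚ_[p]) * (-1) ^ (s * k - l) * xi q⁻¹ ((∑ i, n i) - l) 0 := by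
  have hq0 : q ≠ 0 := by rintro rfl; simp at hq
  simp only [xi_zero_eq_qEulerNumber]
  exact sum_choose_mul_qEulerNumber_eq_sq_mul_sum_inv hq0 hq1
    (fun j => Padic.one_add_pow_ne_zero hp hq (j + 1)) (Nat.mul_pos hs hk) hN
end
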